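/- Let P be the 3rd order, 3-dimensional stochastic tensor with frontal slices P(:,:,1) = [[0,0,0],[1,0,0],[0,1,1]], P(:,:,2) = [[0,0,0],[0,0,0],[1,1,1]], P(:,:,3) = [[0,0,1],[0,0,0],[1,1,0]] (so the (i1,i2) entry of P(:,:,i3) is p_{i1 i2 i3}). Then P is irreducible, but for every k ≥ 2 and all i2, i3 ∈ {1,2,3} one has p^{(k)}_{2 i2 i3} = 0; in particular P is not ergodic. Hence an irreducible higher order Markov chain need not be ergodic. -/

import Mathlib

open Finset

/-- A 3rd order, `n`-dimensional tensor: entry `p_{i₁ i₂ i₃}` is `P i₁ i₂ i₃`. -/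
abbrev Tensor3 (n : ℕ) := Fin n → Fin n → Fin n → ℝ

/-- The product `A ⊠ B`: `(A ⊠ B)_{i₁ i₂ i₃} = Σ_j a_{i₁ j i₂} b_{j i₂ i₃}`. -/
def tmul3 {n : ℕ} (A B : Tensor3 n) : Tensor3 n :=
  fun i₁ i₂ i₃ => ∑ j : Fin n, A i₁ j i₂ * B j i₂ i₃

/-- Tensor powers: `tpow3 P k` is `P^k`, with entries the `k`-step transition
probabilities `p^{(k)}_{i₁ i₂ i₃}`; `P^0` is the identity tensor. -/
def tpow3 {n : ℕ} (P : Tensor3 n) : ℕ → Tensor3 n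
  | 0 => fun i₁ i₂ _ => if i₁ = i₂ then 1 else 0
  | k + 1 => tmul3 (tpow3 P k) P

/-- `fpp3 P k` is the `(k+1)`-step first passage probability tensor `F^{[k+1]}`:
`f^{[1]} = p` and `f^{[k+1]}_{i₁ i₂ i₃} = Σ_{j ≠ i₁} f^{[k]}_{i₁ j i₂} p_{j i₂ i₃}`. -/
def fpp3 {n : ℕ} (P : Tensor3 n) : ℕ → Tensor3 n
  | 0 => P
  | k + 1 => fun i₁ i₂ i₃ =>
      ∑ j ∈ Finset.univ.filter (fun j => j ≠ i₁), fpp3 P k i₁ j i₂ * P j i₂ i₃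

/-- The ever-reaching probability `f_{i₁ i₂ i₃} = Σ_{k=1}^∞ f^{[k]}_{i₁ i₂ i₃}`. -/
noncomputable def everReach3 {n : ℕ} (P : Tensor3 n) : Tensor3 n :=
  fun i₁ i₂ i₃ => ∑' k : ℕ, fpp3 P k i₁ i₂ i₃

/-- State `j` is reachable from state `i` (`i → j`): for every `i₃` there is
`k ≥ 0` with `p^{(k)}_{j i i₃} > 0`. -/
def Reach3 {n : ℕ} (P : Tensor3 n) (i j : Fin n) : Prop :=
  ∀ i₃ : Fin n, ∃ k : ℕ, 0 < tpow3 P k j i i₃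

/-- The chain is irreducible: for every nonempty proper `K ⊊ S` there are
`i₁ ∈ K` and `i₂, i₃ ∉ K` with `p_{i₁ i₂ i₃} > 0`. -/
def Irreducible3 {n : ℕ} (P : Tensor3 n) : Prop :=
  ∀ K : Set (Fin n), K.Nonempty → K ≠ Set.univ →
    ∃ i₁ ∈ K, ∃ i₂, i₂ ∉ K ∧ ∃ i₃, i₃ ∉ K ∧ 0 < P i₁ i₂ i₃

/-- The chain is ergodic: for all `i₁ i₂ i₃` there is `k ≥ 1` with `p^{(k)}_{i₁ i₂ i₃} > 0`. -/
def Ergodic3 {n : ℕ} (P : Tensor3 n) : Prop :=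
  ∀ i₁ i₂ i₃ : Fin n, ∃ k : ℕ, 1 ≤ k ∧ 0 < tpow3 P k i₁ i₂ i₃

/-- The reduced transition matrix `Q` of a second order chain: rows and columns
are indexed by pairs, `Q (i₁,i₂) (j₁,j₂) = p_{i₁ i₂ j₂}` if `j₁ = i₂`, else `0`. -/
def reduced3 {n : ℕ} (P : Tensor3 n) : Matrix (Fin n × Fin n) (Fin n × Fin n) ℝ :=
  fun u v => if v.1 = u.2 then P u.1 u.2 v.2 else 0

/-- The transition tensor of Statement 8 (states `1,2,3` are `0,1,2 : Fin 3`);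
the `(i₁, i₂)` entry of the frontal slice `P(:,:,i₃)` is `p_{i₁ i₂ i₃}`. -/
def P8 : Tensor3 3 := fun i₁ i₂ i₃ =>
  ![!![(0:ℝ), 0, 0; 1, 0, 0; 0, 1, 1],
    !![0, 0, 0; 0, 0, 0; 1, 1, 1],
    !![0, 0, 1; 0, 0, 0; 1, 1, 0]] i₃ i₁ i₂

/- Irreducibility: `P8` has the positive entries `p_{(j+1) j j}` along the cycle `1 → 2 → 3 → 1`,
and every nonempty proper `K` contains some `j + 1` but not `j`. Non-ergodicity: state `2` is
entered only from the pair `(1, 1)`, and `p_{1 1 i₃} = 0`, so after one step state `2` can never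
be occupied again. -/

section Tensor3

variable {n : ℕ}

theorem tpow3_succ_apply (P : Tensor3 n) (k : ℕ) (i₁ i₂ i₃ : Fin n) :
    tpow3 P (k + 1) i₁ i₂ i₃ = ∑ j, tpow3 P k i₁ j i₂ * P j i₂ i₃ :=
  rfl

@[simp]
theorem tpow3_one (P : Tensor3 n) : tpow3 P 1 = P := by
  funext i₁ i₂ i₃
  simp [tpow3, tmul3]

theorem tpow3_two_apply (P : Tensor3 n) (i₁ i₂ i₃ : Fin n) :
    tpow3 P 2 i₁ i₂ i₃ = ∑ j, P i₁ j i₂ * P j i₂ i₃ := by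
  rw [tpow3_succ_apply, tpow3_one]

theorem tpow3_eq_zero_of_le {P : Tensor3 n} {i : Fin n} {k m : ℕ}
    (h : ∀ a b, tpow3 P k i a b = 0) (hkm : k ≤ m) : ∀ a b, tpow3 P m i a b = 0 := by
  induction m, hkm using Nat.le_induction with
  | base => exact h
  | succ m _ ih =>
    intro a b
    simp only [tpow3_succ_apply, ih, zero_mul, Finset.sum_const_zero]

theorem not_ergodic3_of_tpow3_eq_zero {P : Tensor3 n} {i a b : Fin n} (h₁ : P i a b = 0)
    (h : ∀ k, 2 ≤ k → tpow3 P k i a b = 0) : ¬ Ergodic3 P := by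
  rintro hP
  obtain ⟨k, hk, hpos⟩ := hP i a b
  obtain rfl | hk := hk.eq_or_lt
  · rw [tpow3_one, h₁] at hpos
    exact hpos.false
  · rw [h k hk] at hpos
    exact hpos.false

open Fin.NatCast in
theorem Fin.exists_notMem_add_one_mem [NeZero n] {K : Set (Fin n)} (hne : K.Nonempty)
    (hK : K ≠ Set.univ) : ∃ j, j ∉ K ∧ j + 1 ∈ K := by
  by_contra! hclosed
  obtain ⟨a, ha⟩ := (Set.ne_univ_iff_exists_notMem K).1 hK
  have hnot : ∀ m : ℕ, a + (m : Fin n) ∉ K := by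
    intro m
    induction m with
    | zero => simpa using ha
    | succ m ih => simpa [add_assoc] using hclosed _ ih
  obtain ⟨b, hb⟩ := hne
  exact hnot (b - a).val (by simpa using hb)

theorem irreducible3_of_cycle [NeZero n] {P : Tensor3 n} (hP : ∀ j, 0 < P (j + 1) j j) :
    Irreducible3 P := by
  intro K hne hK
  obtain ⟨j, hj, hj₁⟩ := Fin.exists_notMem_add_one_mem hne hK
  exact ⟨j + 1, hj₁, j, hj, j, hj, hP j⟩

end Tensor3

theorem P8_cycle_pos : ∀ j, 0 < P8 (j + 1) j j := by
  simp [Fin.forall_fin_succ, P8]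

theorem tpow3_P8_two_one : ∀ a b, tpow3 P8 2 1 a b = 0 := by
  simp only [tpow3_two_apply]
  simp [P8, Fin.forall_fin_succ, Fin.sum_univ_three]

/-- `P8` is irreducible, yet `p^{(k)}_{2 i₂ i₃} = 0` for all `k ≥ 2`
and all `i₂, i₃` (state `2` is index `1`); in particular `P8` is not ergodic. -/
theorem irreducible_not_ergodic :
    Irreducible3 P8 ∧
    (∀ k : ℕ, 2 ≤ k → ∀ i₂ i₃ : Fin 3, tpow3 P8 k 1 i₂ i₃ = 0) ∧
    ¬ Ergodic3 P8 := by
  have hvanish : ∀ k, 2 ≤ k → ∀ a b, tpow3 P8 k 1 a b = 0 :=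
    fun _ hk => tpow3_eq_zero_of_le tpow3_P8_two_one hk
  have hzero : P8 1 1 1 = 0 := by simp [P8]
  exact ⟨irreducible3_of_cycle P8_cycle_pos, hvanish,
    not_ergodic3_of_tpow3_eq_zero hzero fun k hk => hvanish k hk 1 1⟩
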